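/- arXiv:2309.02269 — 6 statements merged into one kernel-verified Lean document; each statement's English description precedes it below -/
import Mathlib

section
/- Let O ⊆ (0,N)^d be an α-fat object (α ≥ 1) containing at least one integer point, and let ℓ(O) be the maximum level of integer points in O. Then the side length of the smallest axis-parallel d-cube containing O is at most α·2^(ℓ(O)+1). -/
noncomputable section

/-- Closed axis-parallel `d`-cube with lower corner `a` and side length `w`. -/
def Cube {d : ℕ} (a : Fin d → ℝ) (w : ℝ) : Set (Fin d → ℝ) :=
  {x | ∀ i, a i ≤ x i ∧ x i ≤ a i + w}

/-- Open axis-parallel `d`-cube with lower corner `a` and side length `w`. -/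
def OpenCube {d : ℕ} (a : Fin d → ℝ) (w : ℝ) : Set (Fin d → ℝ) :=
  {x | ∀ i, a i < x i ∧ x i < a i + w}

/-- The open box `(0,N)^d`. -/
def Box (d N : ℕ) : Set (Fin d → ℝ) :=
  {x | ∀ i, 0 < x i ∧ x i < N}

/-- The level of an integer point: minimum 2-adic valuation of its coordinates. -/
def level {d : ℕ} (q : Fin d → ℤ) : ℕ := ⨅ i, padicValInt 2 (q i)

/-- Embedding of integer points into `ℝ^d`. -/
def toRealPt {d : ℕ} (q : Fin d → ℤ) : Fin d → ℝ := fun i => (q i : ℝ)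

/-- `w` is the out-width of `O`: side of the smallest enclosing axis-parallel cube. -/
def IsOutWidth {d : ℕ} (O : Set (Fin d → ℝ)) (w : ℝ) : Prop :=
  (∃ a, O ⊆ Cube a w) ∧ ∀ w' a, O ⊆ Cube a w' → w ≤ w'

/-- `w` is the in-width of `O`: side of the largest inscribed axis-parallel cube. -/
def IsInWidth {d : ℕ} (O : Set (Fin d → ℝ)) (w : ℝ) : Prop :=
  (∃ a, Cube a w ⊆ O) ∧ ∀ w' a, Cube a w' ⊆ O → w' ≤ w

/-- `O` is `α`-fat: out-width at most `α` times in-width. -/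
def IsFat {d : ℕ} (α : ℝ) (O : Set (Fin d → ℝ)) : Prop :=
  ∃ wo wi, IsOutWidth O wo ∧ IsInWidth O wi ∧ wo ≤ α * wi

/-- Level of an object: maximum level of integer points inside it. -/
def objLevel {d : ℕ} (O : Set (Fin d → ℝ)) : ℕ :=
  sSup {l | ∃ q : Fin d → ℤ, toRealPt q ∈ O ∧ level q = l}

/-- Integer points of level exactly `l` inside `O`. -/
def lvlPts {d : ℕ} (l : ℕ) (O : Set (Fin d → ℝ)) : Set (Fin d → ℤ) :=
  {q | toRealPt q ∈ O ∧ level q = l}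

/-- `H` hits `O`. -/
def hits {d : ℕ} (H : Set (Fin d → ℤ)) (O : Set (Fin d → ℝ)) : Prop :=
  ∃ q ∈ H, toRealPt q ∈ O

/-- The hitting set maintained by the level-picking algorithm after `n` rounds. -/
def algoH {d : ℕ} (O : ℕ → Set (Fin d → ℝ)) : ℕ → Set (Fin d → ℤ)
  | 0 => ∅
  | n + 1 =>
      algoH O n ∪
        {q | ¬ hits (algoH O n) (O n) ∧ q ∈ lvlPts (objLevel (O n)) (O n)}
/-- the out-width of an `α`-fat object `O ⊆ (0,N)^d` with maximum
integer-point level `l` is at most `α·2^(l+1)`. -/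
theorem out_width_le (d N : ℕ) (α : ℝ) (hα : 1 ≤ α) (O : Set (Fin d → ℝ))
    (hO : O ⊆ Box d N) (hfat : IsFat α O)
    (l : ℕ) (q0 : Fin d → ℤ) (hq0 : toRealPt q0 ∈ O ∧ level q0 = l)
    (hmax : ∀ q : Fin d → ℤ, toRealPt q ∈ O → level q ≤ l)
    (w : ℝ) (hw : IsOutWidth O w) :
    w ≤ α * 2 ^ (l + 1) := by
  -- handle d = 0 : then the minimality condition on w is contradictory
  rcases Nat.eq_zero_or_pos d with hd | hd
  · subst hd
    exfalso
    have h1 : O ⊆ Cube (fun i => (0:ℝ)) (w - 1) := by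
      intro x _ i; exact absurd i.2 (by omega)
    have := hw.2 (w - 1) _ h1
    linarith
  haveI : NeZero d := ⟨by omega⟩
  obtain ⟨wo, wi, hwo, hwi, hle⟩ := hfat
  obtain ⟨a0, ha0⟩ := hwo.1
  have hw_wo : w ≤ wo := hw.2 wo a0 ha0
  have hwi_le : wi ≤ 2 ^ (l + 1) := by
    by_contra h
    push_neg at h
    obtain ⟨a, ha⟩ := hwi.1
    set s : ℝ := 2 ^ (l + 1) with hs
    have hs0 : (0:ℝ) < s := by positivity
    set q : Fin d → ℤ := fun i => ⌈a i / s⌉ * 2 ^ (l + 1) with hq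
    have hcast : ∀ i, (q i : ℝ) = (⌈a i / s⌉ : ℝ) * s := by
      intro i; rw [hq, hs]; push_cast; ring
    have hmem : toRealPt q ∈ Cube a wi := by
      intro i
      constructor
      · rw [toRealPt, hcast i]
        have := Int.le_ceil (a i / s)
        calc a i = (a i / s) * s := by field_simp
          _ ≤ (⌈a i / s⌉ : ℝ) * s := by
            exact mul_le_mul_of_nonneg_right this hs0.le
      · rw [toRealPt, hcast i]
        have h1 : (⌈a i / s⌉ : ℝ) < a i / s + 1 := Int.ceil_lt_add_one _
        have h2 : (⌈a i / s⌉ : ℝ) * s ≤ (a i / s + 1) * s :=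
          mul_le_mul_of_nonneg_right h1.le hs0.le
        have h3 : (a i / s + 1) * s = a i + s := by field_simp
        linarith
    have hmemO : toRealPt q ∈ O := ha hmem
    have hlev : l + 1 ≤ level q := by
      rw [level]
      refine le_ciInf fun i => ?_
      have hpos : (0:ℝ) < (q i : ℝ) := (hO hmemO i).1
      have hne : q i ≠ 0 := by
        intro h0; rw [h0] at hpos; simp at hpos
      have hdvd : ((2:ℤ)) ^ (l + 1) ∣ q i := ⟨⌈a i / s⌉, by rw [hq]; ring⟩
      haveI : Fact (Nat.Prime 2) := ⟨Nat.prime_two⟩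
      have := (padicValInt_dvd_iff (p := 2) (l + 1) (q i)).mp (by exact_mod_cast hdvd)
      exact this.resolve_left hne
    have := hmax q hmemO
    omega
  have hα0 : (0:ℝ) ≤ α := le_trans zero_le_one hα
  calc w ≤ wo := hw_wo
    _ ≤ α * wi := hle
    _ ≤ α * 2 ^ (l + 1) := mul_le_mul_of_nonneg_left hwi_le hα0
end
end

section
/- Let O ⊆ (0,N)^d be an α-fat object (α ≥ 1) containing at least one integer point, and let l = ℓ(O) be the maximum level of integer points in O. Then the number of integer points in O of level exactly l is at most (4α+1)^d. -/
/-!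
The in-width of `O` is less than `2 ^ (l + 1)`: a cube of side at least `2 ^ (l + 1)` inscribed
in `O` would contain an integer point all of whose coordinates are multiples of `2 ^ (l + 1)`,
nonzero because `O` lies in the open positive orthant, hence of level above `l`. By fatness the
out-width is then at most `2 α 2 ^ l`, and the points of level `l` are multiples of `2 ^ l` in
each coordinate inside an enclosing cube of that side, so there are at most `2 α + 1` choices
per coordinate.
-/

noncomputable section

lemma pow_dvd_of_le_level {d l : ℕ} {q : Fin d → ℤ} (h : l ≤ level q) (i : Fin d) :
    (2 : ℤ) ^ l ∣ q i := by
  have hli : l ≤ padicValInt 2 (q i) := h.trans (ciInf_le (OrderBot.bddBelow _) i)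
  exact_mod_cast ((padicValInt_dvd_iff_of_ne_one (by norm_num) l (q i)).mpr (Or.inr hli))

lemma le_level_of_pow_dvd {d k : ℕ} (hd : 0 < d) {q : Fin d → ℤ} (hq : ∀ i, q i ≠ 0)
    (h : ∀ i, (2 : ℤ) ^ k ∣ q i) : k ≤ level q := by
  have : Nonempty (Fin d) := Fin.pos_iff_nonempty.mp hd
  refine le_ciInf fun i => ?_
  have hdvd : ((2 : ℕ) : ℤ) ^ k ∣ q i := by exact_mod_cast h i
  exact ((padicValInt_dvd_iff_of_ne_one (by norm_num) k (q i)).mp hdvd).resolve_left (hq i)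

lemma exists_forall_dvd_mem_cube {d : ℕ} {m : ℤ} (hm : 0 < m) (b : Fin d → ℝ) {w : ℝ}
    (hw : (m : ℝ) ≤ w) : ∃ q : Fin d → ℤ, (∀ i, m ∣ q i) ∧ toRealPt q ∈ Cube b w := by
  have hm' : (0 : ℝ) < m := by exact_mod_cast hm
  refine ⟨fun i => m * ⌈b i / m⌉, fun i => dvd_mul_right _ _, fun i => ?_⟩
  have hle : m * (b i / m) ≤ m * ⌈b i / m⌉ := mul_le_mul_of_nonneg_left (Int.le_ceil _) hm'.le
  have hlt : m * ⌈b i / m⌉ < m * (b i / m + 1) := mul_lt_mul_of_pos_left (Int.ceil_lt_add_one _) hm'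
  rw [mul_div_cancel₀ _ hm'.ne'] at hle
  rw [mul_add, mul_div_cancel₀ _ hm'.ne', mul_one] at hlt
  simp only [toRealPt, Int.cast_mul]
  exact ⟨hle, by linarith⟩

/-- In dimension `0` every cube is the whole (one-point) space, so no side length is maximal. -/
lemma pos_of_isInWidth {d : ℕ} {O : Set (Fin d → ℝ)} {w : ℝ} (h : IsInWidth O w) : 0 < d := by
  obtain ⟨⟨b, hb⟩, hmax⟩ := h
  refine Nat.pos_of_ne_zero fun hd => ?_
  subst hd
  have := hmax (w + 1) b fun x _ => hb fun i => i.elim0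
  linarith

lemma lt_two_pow_succ_of_cube_subset {d l : ℕ} (hd : 0 < d) {O : Set (Fin d → ℝ)}
    (hO : ∀ x ∈ O, ∀ i, x i ≠ 0) (hmax : ∀ q : Fin d → ℤ, toRealPt q ∈ O → level q ≤ l)
    {b : Fin d → ℝ} {w : ℝ} (hb : Cube b w ⊆ O) : w < 2 ^ (l + 1) := by
  by_contra! hw
  obtain ⟨q, hdvd, hq⟩ :=
    exists_forall_dvd_mem_cube (m := 2 ^ (l + 1)) (by positivity) b (by exact_mod_cast hw)
  have hqO := hb hq
  have hne : ∀ i, q i ≠ 0 := fun i h0 => hO _ hqO i (by simp [toRealPt, h0])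
  have := (le_level_of_pow_dvd hd hne hdvd).trans (hmax q hqO)
  omega

lemma card_Icc_ceil_floor_le {s t B : ℝ} (hB0 : 0 ≤ B) (hB : t - s + 1 ≤ B) :
    ((Finset.Icc ⌈s⌉ ⌊t⌋).card : ℝ) ≤ B := by
  rw [Int.card_Icc, ← Int.cast_natCast, Int.toNat_eq_max]
  push_cast
  exact max_le (by linarith [Int.floor_le t, Int.le_ceil s]) hB0

lemma ncard_le_of_forall_dvd_mem_cube {d : ℕ} {m : ℤ} (hm : 0 < m) {a : Fin d → ℝ} {w B : ℝ}
    {s : Set (Fin d → ℤ)} (hs : ∀ q ∈ s, (∀ i, m ∣ q i) ∧ toRealPt q ∈ Cube a w)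
    (hB0 : 0 ≤ B) (hB : w / m + 1 ≤ B) : (s.ncard : ℝ) ≤ B ^ d := by
  have hm' : (0 : ℝ) < m := by exact_mod_cast hm
  set F := Finset.Icc (fun i => ⌈a i / m⌉) (fun i => ⌊(a i + w) / m⌋)
  have hsub : s ⊆ ↑(F.image fun z => m • z) := by
    intro q hq
    obtain ⟨hdvd, hcube⟩ := hs q hq
    choose z hz using hdvd
    refine Finset.mem_image.mpr ⟨z, Finset.mem_Icc.mpr ⟨fun i => ?_, fun i => ?_⟩, funext hz |>.symm⟩
    · rw [Int.ceil_le, div_le_iff₀ hm']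
      simpa [toRealPt, hz, mul_comm] using (hcube i).1
    · rw [Int.le_floor, le_div_iff₀ hm']
      simpa [toRealPt, hz, mul_comm] using (hcube i).2
  have hcard : (s.ncard : ℝ) ≤ F.card := by
    exact_mod_cast (Set.ncard_le_ncard hsub).trans
      ((Set.ncard_coe_finset _).trans_le Finset.card_image_le)
  refine hcard.trans ?_
  rw [Pi.card_Icc, Nat.cast_prod]
  calc ∏ i, ((Finset.Icc ⌈a i / m⌉ ⌊(a i + w) / m⌋).card : ℝ) ≤ ∏ _i : Fin d, B :=
        Finset.prod_le_prod (fun _ _ => by positivity) fun i _ =>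
          card_Icc_ceil_floor_le hB0 (by rw [← sub_div, add_sub_cancel_left]; exact hB)
    _ = B ^ d := by simp

theorem few_top_level_points_general (d N : ℕ) (α : ℝ) (hα : 1 ≤ α) (O : Set (Fin d → ℝ))
    (hO : O ⊆ Box d N) (hfat : IsFat α O)
    (l : ℕ)
    (hmax : ∀ q : Fin d → ℤ, toRealPt q ∈ O → level q ≤ l) :
    (Set.ncard (lvlPts l O) : ℝ) ≤ (4 * α + 1) ^ d := by
  obtain ⟨wo, wi, ⟨⟨a, hOa⟩, -⟩, hin, hwo⟩ := hfat
  obtain ⟨b, hb⟩ := hin.1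
  have hwi : wi < 2 ^ (l + 1) :=
    lt_two_pow_succ_of_cube_subset (pos_of_isInWidth hin) (fun x hx i => (hO hx i).1.ne') hmax hb
  have hwo' : wo / 2 ^ l + 1 ≤ 4 * α + 1 := by
    have h2l : (0 : ℝ) < 2 ^ l := by positivity
    have : wo ≤ 4 * α * 2 ^ l := by rw [pow_succ] at hwi; nlinarith
    linarith [(div_le_iff₀ h2l).mpr this]
  refine ncard_le_of_forall_dvd_mem_cube (m := 2 ^ l) (by positivity)
    (fun q hq => ⟨pow_dvd_of_le_level hq.2.ge, hOa hq.1⟩) (by linarith) ?_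
  exact_mod_cast hwo'

/-- an `α`-fat object `O ⊆ (0,N)^d` of maximum integer-point level `l`
contains at most `(4α+1)^d` integer points of level exactly `l`. -/
theorem few_top_level_points (d N : ℕ) (α : ℝ) (hα : 1 ≤ α) (O : Set (Fin d → ℝ))
    (hO : O ⊆ Box d N) (hfat : IsFat α O)
    (l : ℕ) (q0 : Fin d → ℤ) (hq0 : toRealPt q0 ∈ O ∧ level q0 = l)
    (hmax : ∀ q : Fin d → ℤ, toRealPt q ∈ O → level q ≤ l) :
    (Set.ncard (lvlPts l O) : ℝ) ≤ (4 * α + 1) ^ d :=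
  few_top_level_points_general d N α hα O hO hfat l hmax
end
end

section
/- Fix α ≥ 1, l ∈ ℕ, and a point p. Let S be a family of α-fat objects, each containing p, each of integer-point level exactly l, with the property that no two objects in S contain a common integer point of level l (each object contains at least one such point). Then |S| ≤ (4α+1)^d. -/
noncomputable section

/-- a family of `α`-fat objects through a common point `p`, each of
maximum integer-point level exactly `l`, no two sharing a level-`l` integer point,
has size at most `(4α+1)^d`. -/
theorem family_size_bound (d N : ℕ) (α : ℝ) (hα : 1 ≤ α) (l : ℕ)
    (p : Fin d → ℝ) (S : Set (Set (Fin d → ℝ)))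
    (hmem : ∀ O ∈ S, IsFat α O ∧ p ∈ O ∧ O ⊆ Box d N ∧
      (∃ q : Fin d → ℤ, toRealPt q ∈ O ∧ level q = l) ∧
      (∀ q : Fin d → ℤ, toRealPt q ∈ O → level q ≤ l))
    (hdisj : ∀ O ∈ S, ∀ O' ∈ S, O ≠ O' →
      ¬ ∃ q : Fin d → ℤ, level q = l ∧ toRealPt q ∈ O ∧ toRealPt q ∈ O') :
    (S.ncard : ℝ) ≤ (4 * α + 1) ^ d := by
  classical
  have two_pow_pos : (0:ℝ) < 2 ^ l := by positivity
  have hq : ∀ O ∈ S, ∃ q : Fin d → ℤ, toRealPt q ∈ O ∧ level q = l :=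
    fun O hO => (hmem O hO).2.2.2.1
  choose! qf hq1 hq2 using hq
  -- key per-coordinate facts
  have key : ∀ O ∈ S, ∀ i : Fin d, (2:ℤ)^l ∣ qf O i ∧
      |(qf O i : ℝ) - p i| ≤ α * 2^(l+1) := by
    intro O hO i
    obtain ⟨hfat, hp, hbox, -, hmax⟩ := hmem O hO
    have hqO := hq1 O hO
    have hqlvl := hq2 O hO
    simp only [level] at hqlvl
    have hdvd : (2:ℤ)^l ∣ qf O i := by
      have hle : l ≤ padicValInt 2 (qf O i) := by
        have := ciInf_le (f := fun j => padicValInt 2 (qf O j)) (OrderBot.bddBelow _) i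
        omega
      have := (padicValInt_dvd_iff (p := 2) l (qf O i)).mpr (Or.inr hle)
      exact_mod_cast this
    refine ⟨hdvd, ?_⟩
    obtain ⟨wo, wi, hwo, hwi, hle⟩ := hfat
    -- in-width is less than 2^(l+1)
    have hwi_lt : wi ≤ 2^(l+1) := by
      by_contra hcon
      push_neg at hcon
      obtain ⟨a, ha⟩ := hwi.1
      have hmpos : (0:ℝ) < 2^(l+1) := by positivity
      set q : Fin d → ℤ := fun j => ⌈a j / (2:ℝ)^(l+1)⌉ * 2^(l+1) with hqdef
      have hmemO : toRealPt q ∈ O := by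
        apply ha
        intro j
        have hceil := Int.le_ceil (a j / (2:ℝ)^(l+1))
        have hceil2 := Int.ceil_lt_add_one (a j / (2:ℝ)^(l+1))
        have hval : toRealPt q j = (⌈a j / (2:ℝ)^(l+1)⌉ : ℝ) * 2^(l+1) := by
          simp [toRealPt, hqdef]
        constructor
        · rw [hval]
          have h0 := mul_le_mul_of_nonneg_right hceil (le_of_lt hmpos)
          rw [div_mul_cancel₀ _ (ne_of_gt hmpos)] at h0
          exact h0
        · rw [hval]
          have h1 : (⌈a j / (2:ℝ)^(l+1)⌉ : ℝ) * 2^(l+1) ≤ (a j / 2^(l+1) + 1) * 2^(l+1) :=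
            mul_le_mul_of_nonneg_right (le_of_lt hceil2) (le_of_lt hmpos)
          have h2 : (a j / 2^(l+1) + 1) * 2^(l+1) = a j + 2^(l+1) := by field_simp
          linarith
      have hqpos : ∀ j, 0 < q j := by
        intro j
        have := (hbox hmemO) j
        have : (0:ℝ) < toRealPt q j := this.1
        simp only [toRealPt] at this
        exact_mod_cast this
      have hlvl_ge : l + 1 ≤ level q := by
        have : Nonempty (Fin d) := ⟨i⟩
        simp only [level]
        refine le_ciInf (fun j => ?_)
        have hd : (2:ℤ)^(l+1) ∣ q j := ⟨⌈a j / (2:ℝ)^(l+1)⌉, mul_comm _ _⟩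
        have := (padicValInt_dvd_iff (p := 2) (l+1) (q j)).mp (by exact_mod_cast hd)
        rcases this with h0 | h
        · exact absurd h0 (by have := hqpos j; omega)
        · exact h
      have := hmax q hmemO
      omega
    -- distance bound from out-width
    obtain ⟨a, ha⟩ := hwo.1
    have h1 := ha hqO i
    have h2 := ha hp i
    have hwo_le : wo ≤ α * 2^(l+1) := by
      calc wo ≤ α * wi := hle
      _ ≤ α * 2^(l+1) := by
          apply mul_le_mul_of_nonneg_left hwi_lt (by linarith)
    rw [abs_le]
    simp only [toRealPt] at h1
    constructor <;> linarith
  -- the injective map into a finite set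
  set g : Set (Fin d → ℝ) → (Fin d → ℤ) := fun O j => qf O j / 2^l with hg
  have hginj : Set.InjOn g S := by
    intro O hO O' hO' hgeq
    by_contra hne
    have hqeq : qf O = qf O' := by
      funext j
      obtain ⟨k, hk⟩ := (key O hO j).1
      obtain ⟨k', hk'⟩ := (key O' hO' j).1
      have hne2 : ((2:ℤ)^l) ≠ 0 := pow_ne_zero l two_ne_zero
      have e1 : g O j = k := by simp [hg, hk, Int.mul_ediv_cancel_left _ hne2]
      have e2 : g O' j = k' := by simp [hg, hk', Int.mul_ediv_cancel_left _ hne2]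
      rw [hk, hk']
      rw [hgeq] at e1
      rw [e1] at e2
      rw [e2]
    exact hdisj O hO O' hO' hne ⟨qf O, hq2 O hO, hq1 O hO, hqeq ▸ hq1 O' hO'⟩
  -- target finite set
  set c : Fin d → ℤ := fun i => ⌈p i / 2^l - 2*α⌉ with hc
  set C : Fin d → ℤ := fun i => ⌊p i / 2^l + 2*α⌋ with hC
  set F : Finset (Fin d → ℤ) := Fintype.piFinset (fun i => Finset.Icc (c i) (C i)) with hF
  have hsub : g '' S ⊆ ↑F := by
    rintro _ ⟨O, hO, rfl⟩
    rw [hF, Finset.mem_coe, Fintype.mem_piFinset]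
    intro i
    obtain ⟨⟨k, hk⟩, habs⟩ := key O hO i
    have hne2 : ((2:ℤ)^l) ≠ 0 := pow_ne_zero l two_ne_zero
    have e1 : g O i = k := by simp [hg, hk, Int.mul_ediv_cancel_left _ hne2]
    rw [e1, Finset.mem_Icc]
    have hkr : (qf O i : ℝ) = 2^l * k := by exact_mod_cast congrArg (fun z : ℤ => (z:ℝ)) hk
    have hpow : (2:ℝ)^(l+1) = 2 * 2^l := by ring
    rw [abs_le] at habs
    constructor
    · rw [hc]
      apply Int.ceil_le.mpr
      rw [sub_le_iff_le_add, div_le_iff₀ two_pow_pos]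
      nlinarith [habs.1]
    · rw [hC]
      apply Int.le_floor.mpr
      rw [← sub_le_iff_le_add, le_div_iff₀ two_pow_pos]
      nlinarith [habs.2]
  have hFfin : (g '' S).ncard ≤ F.card := by
    rw [← Set.ncard_coe_finset]
    exact Set.ncard_le_ncard hsub F.finite_toSet
  have hcard : S.ncard ≤ F.card := by
    rw [← Set.ncard_image_of_injOn hginj]
    exact hFfin
  have hFcard : (F.card : ℝ) ≤ (4 * α + 1) ^ d := by
    rw [hF, Fintype.card_piFinset]
    push_cast
    calc (∏ i, ((Finset.Icc (c i) (C i)).card : ℝ))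
        ≤ ∏ _i : Fin d, (4 * α + 1) := by
          apply Finset.prod_le_prod
          · intro i _; positivity
          · intro i _
            rw [Int.card_Icc]
            rcases le_or_gt (C i + 1 - c i) 0 with h | h
            · rw [Int.toNat_of_nonpos h]
              push_cast
              linarith
            · have h2 : (((C i + 1 - c i).toNat : ℤ) : ℝ) = ((C i : ℝ) + 1 - c i) := by
                rw [Int.toNat_of_nonneg (le_of_lt h)]
                push_cast
                ring
              have htn : ((C i + 1 - c i).toNat : ℝ) = ((C i : ℝ) + 1 - c i) := by
                exact_mod_cast h2
              rw [htn]
              have hfl : (C i : ℝ) ≤ p i / 2^l + 2*α := Int.floor_le _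
              have hcl : p i / 2^l - 2*α ≤ (c i : ℝ) := Int.le_ceil _
              linarith
      _ = (4 * α + 1) ^ d := by
          rw [Finset.prod_const, Finset.card_univ, Fintype.card_fin]
  calc (S.ncard : ℝ) ≤ (F.card : ℝ) := by exact_mod_cast hcard
  _ ≤ (4 * α + 1) ^ d := hFcard
end
end

section
/- Let S' be a sequence of α-fat objects in (0,N)^d processed by the level-picking algorithm, such that each object in S' is not hit at its arrival time. Then |S'| ≤ OPT · ⌊log₂ N⌋ · (4α+1)^d, where OPT is the minimum size of a hitting set of S', and the algorithm uses at most (4α+1)^(2d) · ⌊log₂ N⌋ · OPT points in total. -/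
noncomputable section

/-! For each object `Oₙ` pick a point `pₙ` of level `ℓ(Oₙ)` in `Oₙ` and a point `tₙ ∈ T ∩ Oₙ`.
Objects arrive unhit, so the `pₙ` are pairwise distinct. An inscribed cube of side more than
`2^(ℓ+1)` would contain a point of level `ℓ + 1`, so by fatness `Oₙ` lies within sup-distance
`α·2^(ℓ+1)` of `tₙ`. Hence the `pₙ` sharing `tₙ = t` and level `ℓ` are points of `(2^ℓ ℤ)^d` in
a cube of side `4α·2^ℓ` about `t`, which holds at most `(4α+1)^d` such points, one of them a point
of `(2^(ℓ+1) ℤ)^d`, not of level `ℓ`. In `(0,N)^d` only `(2^L, …, 2^L)`, `L = ⌊log₂ N⌋`,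
has level `L`; summing over `T` and the levels gives the first bound. Each round adds at most
`(4α+1)^d` points, which gives the second. -/

open Metric

namespace LevelPicking

variable {d N : ℕ}

lemma pow_level_dvd (q : Fin d → ℤ) (i : Fin d) : (2 : ℤ) ^ level q ∣ q i :=
  (pow_dvd_pow 2 (ciInf_le (OrderBot.bddBelow _) i)).trans
    (by simpa using padicValInt_dvd (p := 2) (q i))

lemma le_level [Nonempty (Fin d)] {q : Fin d → ℤ} {k : ℕ} (hq : ∀ i, q i ≠ 0)
    (hk : ∀ i, (2 : ℤ) ^ k ∣ q i) : k ≤ level q :=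
  le_ciInf fun i => ((padicValInt_dvd_iff k (q i)).mp (by simpa using hk i)).resolve_left (hq i)

lemma toRealPt_mem_box {q : Fin d → ℤ} :
    toRealPt q ∈ Box d N ↔ ∀ i, 0 < q i ∧ q i < N := by
  show (∀ i, (0 : ℝ) < q i ∧ (q i : ℝ) < N) ↔ _
  exact forall_congr' fun i => by norm_cast

lemma two_pow_level_lt [Nonempty (Fin d)] {q : Fin d → ℤ} (hq : toRealPt q ∈ Box d N) :
    2 ^ level q < N := by
  obtain ⟨i⟩ := ‹Nonempty (Fin d)›
  have hqi := toRealPt_mem_box.mp hq i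
  exact_mod_cast (Int.le_of_dvd hqi.1 (pow_level_dvd q i)).trans_lt hqi.2

lemma level_le_log [Nonempty (Fin d)] {q : Fin d → ℤ} (hq : toRealPt q ∈ Box d N) :
    level q ≤ Nat.log 2 N :=
  Nat.le_log_of_pow_le (by norm_num) (two_pow_level_lt hq).le

lemma eq_of_level_eq_log {q : Fin d → ℤ} (hq : toRealPt q ∈ Box d N)
    (hlev : level q = Nat.log 2 N) : q = fun _ => 2 ^ Nat.log 2 N := by
  funext i
  obtain ⟨c, hc⟩ := pow_level_dvd q i
  have hqi := toRealPt_mem_box.mp hq i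
  have hN : (N : ℤ) < 2 ^ Nat.log 2 N * 2 := by
    exact_mod_cast pow_succ 2 (Nat.log 2 N) ▸ Nat.lt_pow_succ_log_self (by norm_num) N
  rw [hlev] at hc
  have h2L : (0 : ℤ) < 2 ^ Nat.log 2 N := by positivity
  have hc1 : c = 1 := by
    rw [hc] at hqi
    have hc0 := pos_of_mul_pos_right hqi.1 h2L.le
    nlinarith
  rw [hc, hc1, mul_one]

lemma card_Icc_ceil_floor_le {a b : ℝ} (hab : a ≤ b) :
    ((Finset.Icc ⌈a⌉ ⌊b⌋).card : ℝ) ≤ b - a + 1 := by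
  have hz : ((⌊b⌋ + 1 - ⌈a⌉ : ℤ) : ℝ) ≤ b - a + 1 := by
    push_cast; linarith [Int.floor_le b, Int.le_ceil a]
  calc ((Finset.Icc ⌈a⌉ ⌊b⌋).card : ℝ) = (((⌊b⌋ + 1 - ⌈a⌉).toNat : ℤ) : ℝ) := by
        rw [Int.card_Icc]; norm_cast
    _ = max ((⌊b⌋ + 1 - ⌈a⌉ : ℤ) : ℝ) 0 := by rw [Int.toNat_eq_max]; push_cast; rfl
    _ ≤ b - a + 1 := max_le hz (by linarith)

/-- On `Fin d → ℝ` (sup metric) `closedBall c r` is the cube of side `2r` centred at `c`. -/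
def latticeBall (l : ℕ) (c : Fin d → ℝ) (r : ℝ) : Set (Fin d → ℤ) :=
  {q | (∀ i, (2 : ℤ) ^ l ∣ q i) ∧ toRealPt q ∈ closedBall c r}

lemma latticeBall_subset_image_Icc (l : ℕ) (c : Fin d → ℝ) (r : ℝ) :
    latticeBall l c r ⊆
      (Finset.Icc (fun i => ⌈(c i - r) / 2 ^ l⌉) (fun i => ⌊(c i + r) / 2 ^ l⌋)).image
        (fun m i => 2 ^ l * m i) := by
  rintro q ⟨hdvd, hq⟩
  choose m hm using hdvd
  have hr : 0 ≤ r := dist_nonneg.trans hq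
  rw [mem_closedBall, dist_pi_le_iff hr] at hq
  have h2l : (0 : ℝ) < 2 ^ l := by positivity
  have hqm : ∀ i, |2 ^ l * (m i : ℝ) - c i| ≤ r := fun i => by
    simpa [toRealPt, Real.dist_eq, hm i] using hq i
  refine Finset.mem_coe.mpr (Finset.mem_image.mpr ⟨m, Finset.mem_Icc.mpr ⟨fun i => ?_, fun i => ?_⟩,
    funext fun i => (hm i).symm⟩)
  · rw [Int.ceil_le, div_le_iff₀ h2l]; linarith [(abs_le.mp (hqm i)).1]
  · rw [Int.le_floor, le_div_iff₀ h2l]; linarith [(abs_le.mp (hqm i)).2]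

lemma finite_latticeBall (l : ℕ) (c : Fin d → ℝ) (r : ℝ) : (latticeBall l c r).Finite :=
  (Finset.finite_toSet _).subset (latticeBall_subset_image_Icc l c r)

lemma ncard_latticeBall_le (l : ℕ) (c : Fin d → ℝ) {r : ℝ} (hr : 0 ≤ r) :
    ((latticeBall l c r).ncard : ℝ) ≤ (2 * r / 2 ^ l + 1) ^ d := by
  have h2l : (0 : ℝ) < 2 ^ l := by positivity
  calc ((latticeBall l c r).ncard : ℝ)
      ≤ (Finset.Icc (fun i => ⌈(c i - r) / 2 ^ l⌉) (fun i => ⌊(c i + r) / 2 ^ l⌋)).card := by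
        exact_mod_cast (Set.ncard_le_ncard (latticeBall_subset_image_Icc l c r)).trans
          ((Set.ncard_coe_finset _).trans_le Finset.card_image_le)
    _ = ∏ i, ((Finset.Icc ⌈(c i - r) / 2 ^ l⌉ ⌊(c i + r) / 2 ^ l⌋).card : ℝ) := by
        rw [Pi.card_Icc]; push_cast; rfl
    _ ≤ ∏ _i : Fin d, (2 * r / 2 ^ l + 1) := by
        gcongr with i
        calc _ ≤ (c i + r) / 2 ^ l - (c i - r) / 2 ^ l + 1 :=
              card_Icc_ceil_floor_le (by gcongr; linarith)
          _ = 2 * r / 2 ^ l + 1 := by ring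
    _ = (2 * r / 2 ^ l + 1) ^ d := by simp

lemma ncard_latticeBall_le_four_mul_add_one (l : ℕ) (c : Fin d → ℝ) {α : ℝ} (hα : 0 ≤ α) :
    ((latticeBall l c (α * 2 ^ (l + 1))).ncard : ℝ) ≤ (4 * α + 1) ^ d := by
  have hratio : 2 * (α * 2 ^ (l + 1)) / 2 ^ l + 1 = 4 * α + 1 := by
    rw [pow_succ]; field_simp; ring
  exact hratio ▸ ncard_latticeBall_le l c (by positivity)

lemma exists_pow_dvd_mem_cube (a : Fin d → ℝ) {w : ℝ} {k : ℕ} (hw : (2 : ℝ) ^ k ≤ w) :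
    ∃ q : Fin d → ℤ, (∀ i, (2 : ℤ) ^ k ∣ q i) ∧ toRealPt q ∈ Cube a w := by
  refine ⟨fun i => 2 ^ k * ⌈a i / 2 ^ k⌉, fun i => dvd_mul_right _ _, fun i => ?_⟩
  have h2k : (0 : ℝ) < 2 ^ k := by positivity
  have hle := (div_le_iff₀ h2k).mp (Int.le_ceil (a i / 2 ^ k))
  have hlt := (lt_div_iff₀ h2k).mp (by linarith [Int.ceil_lt_add_one (a i / 2 ^ k)] :
    (⌈a i / 2 ^ k⌉ : ℝ) - 1 < a i / 2 ^ k)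
  simp only [toRealPt]
  push_cast
  constructor <;> nlinarith

lemma cube_subset_closedBall [Nonempty (Fin d)] {a x : Fin d → ℝ} {w : ℝ} (hx : x ∈ Cube a w) :
    Cube a w ⊆ closedBall x w := by
  obtain ⟨i₀⟩ := ‹Nonempty (Fin d)›
  have hw : 0 ≤ w := by linarith [hx i₀]
  intro y hy
  rw [mem_closedBall, dist_pi_le_iff hw]
  intro i
  rw [Real.dist_eq, abs_le]
  constructor <;> linarith [hx i, hy i]

section Objects

variable {O : Set (Fin d → ℝ)}

lemma nonempty_fin_of_isInWidth {w : ℝ} (h : IsInWidth O w) (hO : O.Nonempty) :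
    Nonempty (Fin d) := by
  by_contra hd
  rw [not_nonempty_iff] at hd
  obtain ⟨x, hx⟩ := hO
  obtain ⟨a, -⟩ := h.1
  have hcube : Cube a (w + 1) ⊆ O := fun y _ => Subsingleton.elim x y ▸ hx
  linarith [h.2 (w + 1) a hcube]

lemma lvlPts_subset_latticeBall {l : ℕ} {x : Fin d → ℝ} {r : ℝ} (hO : O ⊆ closedBall x r) :
    lvlPts l O ⊆ latticeBall l x r :=
  fun q hq => ⟨fun i => hq.2 ▸ pow_level_dvd q i, hO hq.1⟩

variable [Nonempty (Fin d)]

lemma bddAbove_levels (hO : O ⊆ Box d N) :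
    BddAbove {l | ∃ q : Fin d → ℤ, toRealPt q ∈ O ∧ level q = l} :=
  ⟨Nat.log 2 N, by rintro _ ⟨q, hq, rfl⟩; exact level_le_log (hO hq)⟩

lemma exists_mem_lvlPts_objLevel (hO : O ⊆ Box d N) (hne : ∃ q : Fin d → ℤ, toRealPt q ∈ O) :
    ∃ q, q ∈ lvlPts (objLevel O) O := by
  obtain ⟨q, hq⟩ := hne
  exact Nat.sSup_mem (s := {l | ∃ q : Fin d → ℤ, toRealPt q ∈ O ∧ level q = l})
    ⟨level q, q, hq, rfl⟩ (bddAbove_levels hO)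

lemma level_le_objLevel (hO : O ⊆ Box d N) {q : Fin d → ℤ} (hq : toRealPt q ∈ O) :
    level q ≤ objLevel O :=
  le_csSup (bddAbove_levels hO) ⟨q, hq, rfl⟩

lemma objLevel_le_log (hO : O ⊆ Box d N) : objLevel O ≤ Nat.log 2 N :=
  csSup_le' (by rintro _ ⟨q, hq, rfl⟩; exact level_le_log (hO hq))

/-- A larger inscribed cube would contain a lattice point of level above `objLevel O`. -/
lemma le_two_pow_of_cube_subset (hO : O ⊆ Box d N) {b : Fin d → ℝ} {w : ℝ}
    (hb : Cube b w ⊆ O) : w ≤ 2 ^ (objLevel O + 1) := by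
  by_contra! hw
  obtain ⟨q, hdvd, hq⟩ := exists_pow_dvd_mem_cube b hw.le
  have hqO := hb hq
  have hhigh := le_level (fun i => (toRealPt_mem_box.mp (hO hqO) i).1.ne') hdvd
  have hlow := level_le_objLevel hO hqO
  omega

lemma subset_closedBall_of_isFat {α : ℝ} (hα : 0 ≤ α) (hO : O ⊆ Box d N) (hfat : IsFat α O)
    {x : Fin d → ℝ} (hx : x ∈ O) : O ⊆ closedBall x (α * 2 ^ (objLevel O + 1)) := by
  obtain ⟨wo, wi, ⟨⟨a, hao⟩, -⟩, ⟨⟨b, hbi⟩, -⟩, hwo⟩ := hfat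
  have hwo' : wo ≤ α * 2 ^ (objLevel O + 1) :=
    hwo.trans (mul_le_mul_of_nonneg_left (le_two_pow_of_cube_subset hO hbi) hα)
  exact hao.trans ((cube_subset_closedBall (hao hx)).trans (closedBall_subset_closedBall hwo'))

lemma lvlPts_objLevel_finite_and_ncard_le {α : ℝ} (hα : 0 ≤ α) (hO : O ⊆ Box d N)
    (hfat : IsFat α O) :
    (lvlPts (objLevel O) O).Finite ∧ ((lvlPts (objLevel O) O).ncard : ℝ) ≤ (4 * α + 1) ^ d := by
  rcases (lvlPts (objLevel O) O).eq_empty_or_nonempty with hempty | ⟨q, hq⟩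
  · rw [hempty]; exact ⟨Set.finite_empty, by rw [Set.ncard_empty, Nat.cast_zero]; positivity⟩
  have hsub := lvlPts_subset_latticeBall (l := objLevel O)
    (subset_closedBall_of_isFat hα hO hfat hq.1)
  refine ⟨(finite_latticeBall _ _ _).subset hsub, ?_⟩
  calc ((lvlPts (objLevel O) O).ncard : ℝ)
      ≤ (latticeBall (objLevel O) (toRealPt q) (α * 2 ^ (objLevel O + 1))).ncard := by
        exact_mod_cast Set.ncard_le_ncard hsub (finite_latticeBall _ _ _)
    _ ≤ (4 * α + 1) ^ d := ncard_latticeBall_le_four_mul_add_one _ _ hα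

/-- The ball also contains a point of `(2^(l+1) ℤ)^d`, which is not of level `l`. -/
lemma card_add_one_le_of_level_eq {α : ℝ} (hα : 1 ≤ α) {l : ℕ} (t : Fin d → ℝ)
    (Q : Finset (Fin d → ℤ))
    (hQ : ∀ q ∈ Q, level q = l ∧ (∀ i, q i ≠ 0) ∧ toRealPt q ∈ closedBall t (α * 2 ^ (l + 1))) :
    (Q.card : ℝ) + 1 ≤ (4 * α + 1) ^ d := by
  classical
  set ρ := α * 2 ^ (l + 1)
  obtain ⟨w, hwdvd, hwcube⟩ := exists_pow_dvd_mem_cube (fun i => t i - 2 ^ l) (k := l + 1) le_rfl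
  have ht : t ∈ Cube (fun i => t i - 2 ^ l) (2 ^ (l + 1)) := fun i => by
    constructor <;> linarith [pow_succ (2 : ℝ) l, pow_pos (two_pos : (0 : ℝ) < 2) l]
  have hwball : toRealPt w ∈ closedBall t ρ :=
    closedBall_subset_closedBall (le_mul_of_one_le_left (by positivity) hα)
      (cube_subset_closedBall ht hwcube)
  have hwQ : w ∉ Q := fun hw => by
    obtain ⟨hl, h0, -⟩ := hQ w hw
    have := le_level h0 hwdvd
    omega
  have hsub : (↑(insert w Q) : Set (Fin d → ℤ)) ⊆ latticeBall l t ρ := by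
    intro q hq
    rcases Finset.mem_insert.mp hq with rfl | hq
    · exact ⟨fun i => (pow_dvd_pow 2 l.le_succ).trans (hwdvd i), hwball⟩
    · obtain ⟨hl, -, hball⟩ := hQ q hq
      exact ⟨fun i => hl ▸ pow_level_dvd q i, hball⟩
  calc (Q.card : ℝ) + 1 = (↑(insert w Q) : Set (Fin d → ℤ)).ncard := by
        rw [Set.ncard_coe_finset, Finset.card_insert_of_notMem hwQ]; push_cast; rfl
    _ ≤ (latticeBall l t ρ).ncard := by
        exact_mod_cast Set.ncard_le_ncard hsub (finite_latticeBall _ _ _)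
    _ ≤ (4 * α + 1) ^ d := ncard_latticeBall_le_four_mul_add_one _ _ (by linarith)

end Objects

lemma card_le_of_fiber_card_le {ι κ : Type*} [DecidableEq κ] {S : Finset ι} {T : Finset κ}
    {t : ι → κ} {lev : ι → ℕ} {L : ℕ} {B : ℝ} (hL : 1 ≤ L) (ht : ∀ n ∈ S, t n ∈ T)
    (hlev : ∀ n ∈ S, lev n ≤ L)
    (hfiber : ∀ τ l, ((S.filter fun n => t n = τ ∧ lev n = l).card : ℝ) ≤ B - 1)
    (htop : (S.filter fun n => lev n = L).card ≤ 1) :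
    (S.card : ℝ) ≤ T.card * L * B := by
  have hmaps : Set.MapsTo (fun n => (t n, lev n)) S ↑(T ×ˢ Finset.range (L + 1)) := fun n hn =>
    Finset.mem_product.mpr ⟨ht n hn, Finset.mem_range.mpr (Nat.lt_succ_of_le (hlev n hn))⟩
  have hone : ∀ τ, ((S.filter fun n => t n = τ ∧ lev n = L).card : ℝ) ≤ 1 := fun τ => by
    exact_mod_cast
      (Finset.card_le_card (Finset.monotone_filter_right S fun _ _ => And.right)).trans htop
  rw [Finset.card_eq_sum_card_fiberwise hmaps, Finset.sum_product]
  simp only [Prod.mk.injEq]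
  push_cast
  calc ∑ τ ∈ T, ∑ l ∈ Finset.range (L + 1), ((S.filter fun n => t n = τ ∧ lev n = l).card : ℝ)
      ≤ ∑ _τ ∈ T, (∑ _l ∈ Finset.range L, (B - 1) + 1) := by
        gcongr with τ
        rw [Finset.sum_range_succ]
        gcongr with l
        exacts [hfiber τ l, hone τ]
    _ = T.card * (L * (B - 1) + 1) := by
        simp only [Finset.sum_const, Finset.card_range, nsmul_eq_mul]
    _ ≤ T.card * L * B := by
        have hL' : (1 : ℝ) ≤ L := by exact_mod_cast hL
        nlinarith [Nat.cast_nonneg (α := ℝ) T.card]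

section Algorithm

variable {O : ℕ → Set (Fin d → ℝ)}

lemma algoH_mono : Monotone (algoH O) :=
  monotone_nat_of_le_succ fun _ => Set.subset_union_left

lemma algoH_succ_subset (n : ℕ) :
    algoH O (n + 1) ⊆ algoH O n ∪ lvlPts (objLevel (O n)) (O n) :=
  Set.union_subset_union_right _ fun _ hq => hq.2

lemma lvlPts_subset_algoH_succ {n : ℕ} (hn : ¬ hits (algoH O n) (O n)) :
    lvlPts (objLevel (O n)) (O n) ⊆ algoH O (n + 1) :=
  fun _ hq => Or.inr ⟨hn, hq⟩

/-- A point inserted for `O m` is never again inside an object that arrives unhit. -/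
lemma injOn_of_mem_lvlPts {s : ℕ} {pt : ℕ → Fin d → ℤ}
    (hunhit : ∀ n < s, ¬ hits (algoH O n) (O n))
    (hpt : ∀ n < s, pt n ∈ lvlPts (objLevel (O n)) (O n)) : Set.InjOn pt (Set.Iio s) := by
  have hne : ∀ m n, m < n → n < s → pt m ≠ pt n := fun m n hmn hn he =>
    hunhit n hn ⟨pt m, algoH_mono hmn (lvlPts_subset_algoH_succ (hunhit m (hmn.trans hn))
      (hpt m (hmn.trans hn))), he ▸ (hpt n hn).1⟩
  intro m hm n hn he
  rcases lt_trichotomy m n with h | h | h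
  · exact absurd he (hne m n h hn)
  · exact h
  · exact absurd he.symm (hne n m h hm)

lemma algoH_finite_and_ncard_le {s : ℕ} {B : ℝ}
    (h : ∀ n < s, (lvlPts (objLevel (O n)) (O n)).Finite ∧
      ((lvlPts (objLevel (O n)) (O n)).ncard : ℝ) ≤ B) :
    (algoH O s).Finite ∧ ((algoH O s).ncard : ℝ) ≤ s * B := by
  induction s with
  | zero => simp [algoH]
  | succ n ih =>
    obtain ⟨hfin, hcard⟩ := ih fun k hk => h k (hk.trans n.lt_succ_self)
    obtain ⟨hfin', hcard'⟩ := h n n.lt_succ_self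
    have hunion := hfin.union hfin'
    refine ⟨hunion.subset (algoH_succ_subset n), ?_⟩
    have hle := (Set.ncard_le_ncard (algoH_succ_subset n) hunion).trans (Set.ncard_union_le _ _)
    calc ((algoH O (n + 1)).ncard : ℝ)
        ≤ (algoH O n).ncard + (lvlPts (objLevel (O n)) (O n)).ncard := by exact_mod_cast hle
      _ ≤ (n + 1 : ℕ) * B := by push_cast; linarith

variable {pt : ℕ → Fin d → ℤ} {S : Finset ℕ}

lemma card_filter_common_point_le [Nonempty (Fin d)] {α : ℝ} (hα : 1 ≤ α) {tq : ℕ → Fin d → ℤ}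
    (hinj : Set.InjOn pt S) (hbox : ∀ n ∈ S, O n ⊆ Box d N) (hfat : ∀ n ∈ S, IsFat α (O n))
    (hpt : ∀ n ∈ S, pt n ∈ lvlPts (objLevel (O n)) (O n)) (htq : ∀ n ∈ S, toRealPt (tq n) ∈ O n)
    (τ : Fin d → ℤ) (l : ℕ) :
    ((S.filter fun n => tq n = τ ∧ objLevel (O n) = l).card : ℝ) ≤ (4 * α + 1) ^ d - 1 := by
  classical
  have hcard := card_add_one_le_of_level_eq hα (l := l) (toRealPt τ)
    ((S.filter fun n => tq n = τ ∧ objLevel (O n) = l).image pt) (by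
      simp only [Finset.mem_image, Finset.mem_filter]
      rintro _ ⟨n, ⟨hn, rfl, hl⟩, rfl⟩
      rw [← hl]
      exact ⟨(hpt n hn).2, fun i => (toRealPt_mem_box.mp (hbox n hn (hpt n hn).1) i).1.ne',
        subset_closedBall_of_isFat (by linarith) (hbox n hn) (hfat n hn) (htq n hn) (hpt n hn).1⟩)
  rw [Finset.card_image_of_injOn (hinj.mono (Finset.filter_subset _ _))] at hcard
  linarith

lemma card_filter_objLevel_eq_log_le_one (hinj : Set.InjOn pt S)
    (hbox : ∀ n ∈ S, O n ⊆ Box d N) (hpt : ∀ n ∈ S, pt n ∈ lvlPts (objLevel (O n)) (O n)) :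
    (S.filter fun n => objLevel (O n) = Nat.log 2 N).card ≤ 1 := by
  have hdiag : ∀ n ∈ S, objLevel (O n) = Nat.log 2 N → pt n = fun _ => 2 ^ Nat.log 2 N :=
    fun n hn hL => eq_of_level_eq_log (hbox n hn (hpt n hn).1) ((hpt n hn).2.trans hL)
  refine Finset.card_le_one.mpr fun m hm n hn => ?_
  rw [Finset.mem_filter] at hm hn
  exact hinj hm.1 hn.1 ((hdiag m hm.1 hm.2).trans (hdiag n hn.1 hn.2).symm)

end Algorithm

end LevelPicking

open LevelPicking in
/-- if the first `s` objects are all unhit at arrival, then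
`s ≤ OPT·⌊log₂ N⌋·(4α+1)^d` and the algorithm uses at most
`(4α+1)^(2d)·⌊log₂ N⌋·OPT` points, for every (finite) hitting set `T`. -/
theorem competitive_ratio (d N s : ℕ) (hN : 2 ≤ N) (α : ℝ) (hα : 1 ≤ α)
    (O : ℕ → Set (Fin d → ℝ))
    (hbox : ∀ n < s, O n ⊆ Box d N) (hfat : ∀ n < s, IsFat α (O n))
    (hint : ∀ n < s, ∃ q : Fin d → ℤ, toRealPt q ∈ O n)
    (hunhit : ∀ n < s, ¬ hits (algoH O n) (O n))
    (T : Set (Fin d → ℤ)) (hTfin : T.Finite)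
    (hThit : ∀ n < s, ∃ q ∈ T, toRealPt q ∈ O n) :
    (s : ℝ) ≤ T.ncard * Nat.log 2 N * (4 * α + 1) ^ d ∧
    ((algoH O s).ncard : ℝ) ≤ (4 * α + 1) ^ (2 * d) * Nat.log 2 N * T.ncard := by
  classical
  obtain rfl | hs := s.eq_zero_or_pos
  · simp only [algoH, Set.ncard_empty, Nat.cast_zero]
    constructor <;> positivity
  obtain ⟨-, wi, -, hwi, -⟩ := hfat 0 hs
  obtain ⟨q₀, hq₀⟩ := hint 0 hs
  have := nonempty_fin_of_isInWidth hwi ⟨_, hq₀⟩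
  choose! pt hpt using fun n hn => exists_mem_lvlPts_objLevel (hbox n hn) (hint n hn)
  choose! tq htqT htqO using hThit
  have hpoints := (algoH_finite_and_ncard_le fun n hn =>
    lvlPts_objLevel_finite_and_ncard_le (by linarith) (hbox n hn) (hfat n hn)).2
  have hinj : Set.InjOn pt ↑(Finset.range s) := by
    rw [Finset.coe_range]; exact injOn_of_mem_lvlPts hunhit hpt
  simp only [← Finset.mem_range] at hbox hfat hpt htqT htqO
  have hobjects := card_le_of_fiber_card_le (S := Finset.range s) (T := hTfin.toFinset)
    (Nat.log_pos one_lt_two hN) (fun n hn => hTfin.mem_toFinset.mpr (htqT n hn))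
    (fun n hn => objLevel_le_log (hbox n hn))
    (card_filter_common_point_le hα hinj hbox hfat hpt htqO)
    (card_filter_objLevel_eq_log_le_one hinj hbox hpt)
  rw [Finset.card_range, ← Set.ncard_eq_toFinset_card T hTfin] at hobjects
  refine ⟨hobjects, hpoints.trans ?_⟩
  calc (s : ℝ) * (4 * α + 1) ^ d
      ≤ T.ncard * Nat.log 2 N * (4 * α + 1) ^ d * (4 * α + 1) ^ d := by gcongr
    _ = (4 * α + 1) ^ (2 * d) * Nat.log 2 N * T.ncard := by ring
end
end

section
/- Let α ≥ 1 and let (w_j) be a sequence of positive reals with w_1 = N and w_{j+1} ≥ w_j / (α(k_j + 1)) for positive integers k_j, for j = 1, ..., s. If w_{s+1} ≤ 1, then Σ_{j=1}^s k_j ≥ (log N)/(1 + log α). -/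
noncomputable section

/-! Telescoping the recursion gives `N ≤ ∏ α (k_j + 1)`. Taking logarithms, each factor
contributes `log α + log (k_j + 1) ≤ k_j log α + k_j`, by `k_j ≥ 1` and `1 + x ≤ eˣ`. -/

open Finset

theorem le_prod_mul_of_le_mul {R : Type*} [CommSemiring R] [PartialOrder R]
    [IsOrderedRing R] {w c : ℕ → R} {m n : ℕ} (hmn : m ≤ n) (hc : ∀ j, 0 ≤ c j)
    (hstep : ∀ j, m ≤ j → j < n → w j ≤ c j * w (j + 1)) :
    w m ≤ (∏ j ∈ Ico m n, c j) * w n := by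
  induction n, hmn using Nat.le_induction with
  | base => simp
  | succ n hmn ih =>
    calc w m ≤ (∏ j ∈ Ico m n, c j) * w n := ih fun j hmj hjn => hstep j hmj (by omega)
      _ ≤ (∏ j ∈ Ico m n, c j) * (c n * w (n + 1)) :=
          mul_le_mul_of_nonneg_left (hstep n hmn (by omega)) (prod_nonneg fun j _ => hc j)
      _ = (∏ j ∈ Ico m (n + 1), c j) * w (n + 1) := by
          rw [prod_Ico_succ_top hmn, mul_assoc]

theorem Real.log_mul_add_one_le {α x : ℝ} (hα : 1 ≤ α) (hx : 1 ≤ x) :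
    Real.log (α * (x + 1)) ≤ x * (1 + Real.log α) := by
  have hlogα : 0 ≤ Real.log α := Real.log_nonneg hα
  have hlog_succ : Real.log (x + 1) ≤ x := by
    rw [Real.log_le_iff_le_exp (by linarith)]
    exact Real.add_one_le_exp x
  rw [Real.log_mul (by linarith) (by linarith)]
  nlinarith

theorem lower_bound_arith_general (s : ℕ) (α N : ℝ) (hα : 1 ≤ α) (hN : 0 < N)
    (w : ℕ → ℝ) (k : ℕ → ℕ) (hk : ∀ j, 1 ≤ k j)
    (hw1 : w 1 = N)
    (hrec : ∀ j, 1 ≤ j → j ≤ s → w j / (α * (k j + 1)) ≤ w (j + 1))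
    (hend : w (s + 1) ≤ 1) :
    Real.log N / (1 + Real.log α) ≤ ∑ j ∈ Finset.Icc 1 s, (k j : ℝ) := by
  have hc : ∀ j, 0 < α * (k j + 1) := fun j => by positivity
  have hN_le : N ≤ ∏ j ∈ Icc 1 s, α * (k j + 1) := by
    have htele := le_prod_mul_of_le_mul (w := w) (Nat.le_add_left 1 s) (fun j => (hc j).le)
      fun j h1j hjs => (div_le_iff₀' (hc j)).1 (hrec j h1j (Nat.lt_succ_iff.1 hjs))
    rw [Ico_add_one_right_eq_Icc, hw1] at htele
    exact htele.trans (mul_le_of_le_one_right (prod_nonneg fun j _ => (hc j).le) hend)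
  rw [div_le_iff₀ (by linarith [Real.log_nonneg hα])]
  calc Real.log N ≤ Real.log (∏ j ∈ Icc 1 s, α * (k j + 1)) := Real.log_le_log hN hN_le
    _ = ∑ j ∈ Icc 1 s, Real.log (α * (k j + 1)) := Real.log_prod fun j _ => (hc j).ne'
    _ ≤ ∑ j ∈ Icc 1 s, (k j : ℝ) * (1 + Real.log α) :=
        sum_le_sum fun j _ => Real.log_mul_add_one_le hα (by exact_mod_cast hk j)
    _ = (∑ j ∈ Icc 1 s, (k j : ℝ)) * (1 + Real.log α) := (sum_mul ..).symm

/-- arithmetic core of the lower bound: from `w 1 = N`,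
`w (j+1) ≥ w j / (α (k j + 1))` and `w (s+1) ≤ 1` we get
`Σ k_j ≥ log N / (1 + log α)`. -/
theorem lower_bound_arith (s : ℕ) (α N : ℝ) (hα : 1 ≤ α) (hN : 0 < N)
    (w : ℕ → ℝ) (k : ℕ → ℕ) (hk : ∀ j, 1 ≤ k j)
    (hpos : ∀ j, 0 < w j) (hw1 : w 1 = N)
    (hrec : ∀ j, 1 ≤ j → j ≤ s → w j / (α * (k j + 1)) ≤ w (j + 1))
    (hend : w (s + 1) ≤ 1) :
    Real.log N / (1 + Real.log α) ≤ ∑ j ∈ Finset.Icc 1 s, (k j : ℝ) :=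
  lower_bound_arith_general s α N hα hN w k hk hw1 hrec hend
end
end

section
/- Let O ⊆ (0,N)^d be a set and suppose q is an integer point of maximum level in O that some algorithm selects upon O's arrival. Then any later object O' of the same level containing q is hit at its arrival. Consequently, in any run of the level-picking algorithm, no two objects that are unhit at arrival, have the same level l, and contain a common point p, can share an integer point of level l. -/
noncomputable section

lemma algoH_mono {d : ℕ} (O : ℕ → Set (Fin d → ℝ)) {m n : ℕ} (h : m ≤ n) :
    algoH O m ⊆ algoH O n := by
  induction n with
  | zero => simp [Nat.le_zero.mp h]
  | succ n ih =>
    rcases eq_or_lt_of_le h with h' | h'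
    · subst h'; exact subset_rfl
    · intro q hq
      have := ih (Nat.lt_succ_iff.mp h') hq
      simp only [algoH, Set.mem_union]
      exact Or.inl this

/-- if `q` is a maximum-level integer point selected by the
level-picking algorithm upon arrival of an unhit object, then any later object of
the same level containing `q` is hit at arrival; consequently two objects that are
unhit at arrival, have the same level `l` and contain a common point cannot share
an integer point of level `l`. -/
theorem no_shared_level_point (d : ℕ) (O : ℕ → Set (Fin d → ℝ)) :
    (∀ n n', n < n' → ¬ hits (algoH O n) (O n) →
      ∀ q : Fin d → ℤ, level q = objLevel (O n) → toRealPt q ∈ O n →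
        objLevel (O n') = objLevel (O n) → toRealPt q ∈ O n' →
          hits (algoH O n') (O n')) ∧
    (∀ n n' l, n < n' → ¬ hits (algoH O n) (O n) → ¬ hits (algoH O n') (O n') →
      objLevel (O n) = l → objLevel (O n') = l →
      (∃ p, p ∈ O n ∧ p ∈ O n') →
        ¬ ∃ q : Fin d → ℤ, level q = l ∧ toRealPt q ∈ O n ∧ toRealPt q ∈ O n') := by
  
  have key : ∀ n n', n < n' → ¬ hits (algoH O n) (O n) →
      ∀ q : Fin d → ℤ, level q = objLevel (O n) → toRealPt q ∈ O n →
        toRealPt q ∈ O n' → hits (algoH O n') (O n') := by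
    intro n n' hnn hun q hlev hmem hmem'
    have hq1 : q ∈ algoH O (n + 1) := by
      simp only [algoH, Set.mem_union, Set.mem_setOf_eq]
      exact Or.inr ⟨hun, hmem, hlev⟩
    exact ⟨q, algoH_mono O (Nat.succ_le_of_lt hnn) hq1, hmem'⟩
  refine ⟨fun n n' h1 h2 q h3 h4 _ h6 => key n n' h1 h2 q h3 h4 h6, ?_⟩
  rintro n n' l hnn hun hun' hl hl' - ⟨q, hq, hq1, hq2⟩
  exact hun' (key n n' hnn hun q (hq.trans hl.symm) hq1 hq2)
end
end
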